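/- Let $c_1\in(0,1]$, $c_2\geq 0$, $\alpha\colon[0,1]\to[c_1,1]$ differentiable with $|\dot\alpha(t)|\leq c_2/c_1$ for all $t$. Suppose $A^{(2)}\colon\mathbb{R}^2\to\mathbb{R}^{2\times 2}_{sym}$ satisfies $(A^{(2)}(y)\xi)\cdot\xi\geq(1-c_1^2/2)|\xi|^2$ for all $\xi$. For $|y_1|\leq\eta$ define the matrix $M(t,y)=D(t)A^{(2)}(y)D(t)-\big(\frac{1-\alpha(t)^2}{\alpha(t)^2}+y_1\frac{2\sqrt{1-\alpha(t)^2}\,\dot\alpha(t)}{\alpha(t)^3}+y_1^2\frac{\dot\alpha(t)^2}{\alpha(t)^4}\big)\,e_1\otimes e_1$, where $D(t)=\mathrm{diag}(1/\alpha(t),1)$. Then there exists $\eta_0>0$ depending only on $c_1,c_2$ such that for all $0<\eta\leq\eta_0$, all $t\in[0,1]$, all $|y_1|\leq\eta$, and all $\xi\in\mathbb{R}^2$: $(M(t,y)\xi)\cdot\xi\geq\min\{c_1^2/4,1/2\}\,|\xi|^2$. -/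

import Mathlib

/-!
Write `M = D A D - s e₁⊗e₁`. Its quadratic form is `(Dξ)·A(Dξ) - s ξ₀²`, so coercivity of `A`
bounds it below by `(1 - c₁²/2)(ξ₀²/α² + ξ₁²) - s ξ₀²`. Subtracting the leading part
`(1 - α²)/α²` of `s` from `(1 - c₁²/2)/α²` leaves `1 - c₁²/(2α²) ≥ 1/2`, because `α ≥ c₁`.
The remaining terms of `s` are at most `2e + e²` with `e = |y₁ α̇|/α³ ≤ η c₂/c₁⁴`, hence at most
`1/4` for `η ≤ c₁⁴/(10(c₂ + 1))`, which leaves room for `c₁²/4 = min (c₁²/4) (1/2)`.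
-/

open Real Matrix

theorem dotProduct_diagonal_mul_mul_diagonal_mulVec {n R : Type*} [Fintype n] [DecidableEq n]
    [CommSemiring R] (d ξ : n → R) (B : Matrix n n R) :
    ξ ⬝ᵥ ((diagonal d * B * diagonal d) *ᵥ ξ) = (d * ξ) ⬝ᵥ (B *ᵥ (d * ξ)) := by
  have hleft : ξ ᵥ* diagonal d = d * ξ := funext fun i => by simp [vecMul_diagonal, mul_comm]
  have hright : diagonal d *ᵥ ξ = d * ξ := funext fun i => mulVec_diagonal d ξ i
  rw [← mulVec_mulVec, ← mulVec_mulVec, dotProduct_mulVec, hleft, hright]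

theorem quadForm_rescale_sub_rankOne (a s : ℝ) (B : Matrix (Fin 2) (Fin 2) ℝ) (ξ : Fin 2 → ℝ) :
    ξ ⬝ᵥ ((diagonal ![1 / a, 1] * B * diagonal ![1 / a, 1] - s • diagonal ![1, 0]) *ᵥ ξ)
      = ![ξ 0 / a, ξ 1] ⬝ᵥ (B *ᵥ ![ξ 0 / a, ξ 1]) - s * ξ 0 ^ 2 := by
  have hvec : ![1 / a, 1] * ξ = ![ξ 0 / a, ξ 1] := by
    ext i; fin_cases i <;> simp [div_eq_inv_mul]
  rw [sub_mulVec, dotProduct_sub, dotProduct_diagonal_mul_mul_diagonal_mulVec, hvec,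
    smul_mulVec, dotProduct_smul]
  simp [dotProduct, Fin.sum_univ_two, sq]

theorem perturbation_le {a b y : ℝ} (ha : 0 < a) (ha1 : a ≤ 1) :
    y * (2 * √(1 - a ^ 2) * b) / a ^ 3 + y ^ 2 * (b ^ 2 / a ^ 4)
      ≤ 2 * (|y * b| / a ^ 3) + (|y * b| / a ^ 3) ^ 2 := by
  set e := |y * b| / a ^ 3
  have hsqrt : √(1 - a ^ 2) ≤ 1 := Real.sqrt_le_one.2 (by nlinarith)
  have he : y * b / a ^ 3 ≤ e := by
    rw [div_le_div_iff_of_pos_right (by positivity)]; exact le_abs_self _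
  have hlin : y * (2 * √(1 - a ^ 2) * b) / a ^ 3 ≤ 2 * e :=
    calc y * (2 * √(1 - a ^ 2) * b) / a ^ 3 = 2 * √(1 - a ^ 2) * (y * b / a ^ 3) := by ring
      _ ≤ 2 * √(1 - a ^ 2) * e := by gcongr
      _ ≤ 2 * 1 * e := by gcongr
      _ = 2 * e := by ring
  have hquad : y ^ 2 * (b ^ 2 / a ^ 4) ≤ e ^ 2 :=
    calc y ^ 2 * (b ^ 2 / a ^ 4) = e ^ 2 * a ^ 2 := by
          rw [div_pow, sq_abs]; field_simp
      _ ≤ e ^ 2 * 1 := by gcongr; nlinarith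
      _ = e ^ 2 := mul_one _
  linarith

theorem coefficient_bound {c a r : ℝ} (hc : 0 < c) (hc1 : c ≤ 1) (hca : c ≤ a) (hr : r ≤ 1 / 4) :
    c ^ 2 / 4 + ((1 - a ^ 2) / a ^ 2 + r) ≤ (1 - c ^ 2 / 2) / a ^ 2 := by
  have ha : 0 < a := hc.trans_le hca
  have hca2 : c ^ 2 / (2 * a ^ 2) ≤ 1 / 2 := by
    rw [div_le_iff₀ (by positivity)]; nlinarith
  have key : (1 - c ^ 2 / 2) / a ^ 2 - (c ^ 2 / 4 + ((1 - a ^ 2) / a ^ 2 + r))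
      = 1 - c ^ 2 / 4 - r - c ^ 2 / (2 * a ^ 2) := by
    field_simp; ring
  nlinarith

theorem quadForm_lower_bound {a s lam mu : ℝ} (B : Matrix (Fin 2) (Fin 2) ℝ)
    (hB : ∀ ξ : Fin 2 → ℝ, lam * (ξ 0 ^ 2 + ξ 1 ^ 2) ≤ ξ ⬝ᵥ (B *ᵥ ξ))
    (hmu : mu ≤ lam) (hs : mu + s ≤ lam / a ^ 2) (ξ : Fin 2 → ℝ) :
    mu * (ξ 0 ^ 2 + ξ 1 ^ 2) ≤ ![ξ 0 / a, ξ 1] ⬝ᵥ (B *ᵥ ![ξ 0 / a, ξ 1]) - s * ξ 0 ^ 2 := by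
  have hcoerc := hB ![ξ 0 / a, ξ 1]
  simp only [cons_val_zero, cons_val_one] at hcoerc
  have h0 : (mu + s) * ξ 0 ^ 2 ≤ lam * (ξ 0 / a) ^ 2 := by
    rw [div_pow, mul_div_assoc', ← div_mul_eq_mul_div]
    exact mul_le_mul_of_nonneg_right hs (sq_nonneg _)
  have h1 : mu * ξ 1 ^ 2 ≤ lam * ξ 1 ^ 2 := mul_le_mul_of_nonneg_right hmu (sq_nonneg _)
  nlinarith

theorem abs_mul_div_pow_three_le {c K a b y η : ℝ} (hc : 0 < c) (hca : c ≤ a)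
    (hb : |b| ≤ K / c) (hy : |y| ≤ η) :
    |y * b| / a ^ 3 ≤ η * K / c ^ 4 :=
  calc |y * b| / a ^ 3 ≤ η * (K / c) / c ^ 3 := by
        rw [abs_mul]
        have hη : 0 ≤ η := (abs_nonneg _).trans hy
        exact div_le_div₀ (mul_nonneg hη ((abs_nonneg _).trans hb))
          (mul_le_mul hy hb (abs_nonneg _) hη) (by positivity) (pow_le_pow_left₀ hc.le hca 3)
    _ = η * K / c ^ 4 := by field_simp

theorem stmt12_general (c1 c2 : ℝ) (hc1 : 0 < c1) (hc1' : c1 ≤ 1) (hc2 : 0 ≤ c2)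
    (α α' : ℝ → ℝ)
    (hrange : ∀ t ∈ Set.Icc (0:ℝ) 1, α t ∈ Set.Icc c1 1)
    (hα' : ∀ t ∈ Set.Icc (0:ℝ) 1, |α' t| ≤ c2 / c1)
    (A2 : ℝ × ℝ → Matrix (Fin 2) (Fin 2) ℝ)
    (hcoerc : ∀ y (ξ : Fin 2 → ℝ), (1 - c1^2/2) * (ξ 0^2 + ξ 1^2) ≤ ξ ⬝ᵥ (A2 y).mulVec ξ) :
    ∃ η0 > 0, ∀ η : ℝ, 0 < η → η ≤ η0 → ∀ t ∈ Set.Icc (0:ℝ) 1, ∀ y : ℝ × ℝ, |y.1| ≤ η →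
      ∀ ξ : Fin 2 → ℝ,
        min (c1^2/4) (1/2) * (ξ 0^2 + ξ 1^2) ≤
          ξ ⬝ᵥ ((Matrix.diagonal ![1 / α t, 1] * A2 y * Matrix.diagonal ![1 / α t, 1]
            - ((1 - (α t)^2) / (α t)^2
                + y.1 * (2 * Real.sqrt (1 - (α t)^2) * α' t) / (α t)^3
                + y.1^2 * ((α' t)^2 / (α t)^4)) • Matrix.diagonal ![1, 0]).mulVec ξ) := by
  refine ⟨c1 ^ 4 / (10 * (c2 + 1)), by positivity, ?_⟩
  intro η hη hηle t ht y hy ξ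
  obtain ⟨hca, ha1⟩ := hrange t ht
  have ha : 0 < α t := hc1.trans_le hca
  have hηc2 : η * c2 / c1 ^ 4 ≤ 1 / 10 := by
    rw [le_div_iff₀ (by positivity)] at hηle
    rw [div_le_iff₀ (by positivity)]
    nlinarith
  have hsmall := (abs_mul_div_pow_three_le hc1 hca (hα' t ht) hy).trans hηc2
  have hr : y.1 * (2 * √(1 - α t ^ 2) * α' t) / α t ^ 3 + y.1 ^ 2 * (α' t ^ 2 / α t ^ 4)
      ≤ 1 / 4 := by
    have he : 0 ≤ |y.1 * α' t| / α t ^ 3 := by positivity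
    nlinarith [perturbation_le (y := y.1) (b := α' t) ha ha1]
  rw [min_eq_left (by nlinarith), quadForm_rescale_sub_rankOne]
  refine quadForm_lower_bound (A2 y) (hcoerc y) (by nlinarith) ?_ ξ
  rw [add_assoc]
  exact coefficient_bound hc1 hc1' hca hr

theorem stmt12 (c1 c2 : ℝ) (hc1 : 0 < c1) (hc1' : c1 ≤ 1) (hc2 : 0 ≤ c2)
    (α α' : ℝ → ℝ)
    (hderiv : ∀ t ∈ Set.Icc (0:ℝ) 1, HasDerivAt α (α' t) t)
    (hrange : ∀ t ∈ Set.Icc (0:ℝ) 1, α t ∈ Set.Icc c1 1)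
    (hα' : ∀ t ∈ Set.Icc (0:ℝ) 1, |α' t| ≤ c2 / c1)
    (A2 : ℝ × ℝ → Matrix (Fin 2) (Fin 2) ℝ)
    (hsym : ∀ y, (A2 y).IsSymm)
    (hcoerc : ∀ y (ξ : Fin 2 → ℝ), (1 - c1^2/2) * (ξ 0^2 + ξ 1^2) ≤ ξ ⬝ᵥ (A2 y).mulVec ξ) :
    ∃ η0 > 0, ∀ η : ℝ, 0 < η → η ≤ η0 → ∀ t ∈ Set.Icc (0:ℝ) 1, ∀ y : ℝ × ℝ, |y.1| ≤ η →
      ∀ ξ : Fin 2 → ℝ,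
        min (c1^2/4) (1/2) * (ξ 0^2 + ξ 1^2) ≤
          ξ ⬝ᵥ ((Matrix.diagonal ![1 / α t, 1] * A2 y * Matrix.diagonal ![1 / α t, 1]
            - ((1 - (α t)^2) / (α t)^2
                + y.1 * (2 * Real.sqrt (1 - (α t)^2) * α' t) / (α t)^3
                + y.1^2 * ((α' t)^2 / (α t)^4)) • Matrix.diagonal ![1, 0]).mulVec ξ) :=
  stmt12_general c1 c2 hc1 hc1' hc2 α α' hrange hα' A2 hcoerc
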